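/- arXiv:2605.06986 — 6 statements merged into one kernel-verified Lean document; each statement's English description precedes it below -/
import Mathlib

section
/- Let K be a field with a topology making addition and multiplication continuous. Suppose K satisfies the polynomial implicit function theorem: for all n, m ≥ 1, every polynomial map f : K^n × K^m → K^m (each coordinate of f given by a polynomial over K in n + m variables), and every point (a,b) ∈ K^n × K^m with f(a,b) = 0 such that the m × m matrix of partial derivatives (∂fᵢ/∂yⱼ) with respect to the last m variables, evaluated at (a,b), is invertible, there exist open neighborhoods U ∋ a and V ∋ b and a continuous function g : U → V such that for (x,y) ∈ U × V one has f(x,y) = 0 if and only if y = g(x). Then K satisfies continuity of simple roots: for every d ≥ 1, every monic polynomial Q ∈ K[X] of degree d having a simple root a ∈ K (i.e. Q(a) = 0 and Q′(a) ≠ 0), and every neighborhood U of a, there is a neighborhood V ⊆ K^d (product topology) of the coefficient tuple of Q such that every monic degree-d polynomial whose coefficient tuple lies in V has a root in U. -/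
/-- The monic polynomial `X^d + a_{d-1} X^{d-1} + ⋯ + a₁ X + a₀` determined by the
coefficient tuple `a ∈ K^d`. -/
noncomputable def monicOfCoeffs {K : Type*} [Field K] {d : ℕ} (a : Fin d → K) :
    Polynomial K :=
  Polynomial.X ^ d + ∑ i : Fin d, Polynomial.C (a i) * Polynomial.X ^ (i : ℕ)

/-!
Apply the implicit function theorem to the generic monic polynomial
`F(a, y) = y^d + a_{d-1} y^{d-1} + ⋯ + a₀`, viewed as one polynomial equation in the
coefficients `a ∈ K^d` and the root `y ∈ K`. Its `y`-derivative at `(q, a)` is `Q'(a) ≠ 0`,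
so near `q` the root is a continuous function `g` of the coefficients with `g q = a`;
continuity of `g` at `q` keeps `g p` inside the given neighbourhood of `a`.
-/

section GenericMonic

variable {K : Type*} [Field K]

/-- `monicOfCoeffs` with its coefficients and its variable all turned into indeterminates:
`Sum.inl i` stands for the `i`-th coefficient and `Sum.inr 0` for the variable. -/
noncomputable def genericMonic (d : ℕ) : MvPolynomial (Fin d ⊕ Fin 1) K :=
  MvPolynomial.X (Sum.inr 0) ^ d +
    ∑ i : Fin d, MvPolynomial.X (Sum.inl i) * MvPolynomial.X (Sum.inr 0) ^ (i : ℕ)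

theorem eval_genericMonic {d : ℕ} (a : Fin d → K) (y : Fin 1 → K) :
    MvPolynomial.eval (Sum.elim a y) (genericMonic d) =
      (monicOfCoeffs a).eval (y 0) := by
  simp [genericMonic, monicOfCoeffs, Polynomial.eval_finsetSum]

theorem eval_pderiv_genericMonic {d : ℕ} (a : Fin d → K) (y : Fin 1 → K) :
    MvPolynomial.eval (Sum.elim a y) (MvPolynomial.pderiv (Sum.inr 0) (genericMonic d)) =
      (Polynomial.derivative (monicOfCoeffs a)).eval (y 0) := by
  simp [genericMonic, monicOfCoeffs, MvPolynomial.pderiv_X, Polynomial.eval_finsetSum,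
    Polynomial.derivative_X_pow]

end GenericMonic

theorem Matrix.isUnit_of_fin_one {R : Type*} [CommRing R] {A : Matrix (Fin 1) (Fin 1) R}
    (h : IsUnit (A 0 0)) : IsUnit A := by
  rwa [Matrix.isUnit_iff_isUnit_det, Matrix.det_fin_one]

theorem stmt5_general {K : Type*} [Field K] [TopologicalSpace K]
    (hIFT : ∀ n m : ℕ, 1 ≤ n → 1 ≤ m →
      ∀ (F : Fin m → MvPolynomial (Fin n ⊕ Fin m) K) (a : Fin n → K) (b : Fin m → K),
        (∀ i, MvPolynomial.eval (Sum.elim a b) (F i) = 0) →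
        IsUnit (Matrix.of fun i j : Fin m =>
          MvPolynomial.eval (Sum.elim a b) (MvPolynomial.pderiv (Sum.inr j) (F i))) →
        ∃ (U : Set (Fin n → K)) (V : Set (Fin m → K)) (g : (Fin n → K) → (Fin m → K)),
          IsOpen U ∧ IsOpen V ∧ a ∈ U ∧ b ∈ V ∧ ContinuousOn g U ∧
          (∀ x ∈ U, g x ∈ V) ∧
          ∀ x ∈ U, ∀ y ∈ V,
            ((∀ i, MvPolynomial.eval (Sum.elim x y) (F i) = 0) ↔ y = g x)) :
    ∀ d : ℕ, 1 ≤ d → ∀ q : Fin d → K, ∀ a : K,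
      (monicOfCoeffs q).IsRoot a →
      Polynomial.eval a (Polynomial.derivative (monicOfCoeffs q)) ≠ 0 →
      ∀ U ∈ nhds a, ∃ V ∈ nhds q, ∀ p ∈ V, ∃ x ∈ U, (monicOfCoeffs p).IsRoot x := by
  intro d hd q a hroot hsimple U hU
  have hzero : ∀ _ : Fin 1, MvPolynomial.eval (Sum.elim q fun _ => a) (genericMonic d) = 0 :=
    fun _ => by rw [eval_genericMonic]; exact hroot
  have hunit := Matrix.isUnit_of_fin_one (R := K)
    (A := Matrix.of fun _ j => MvPolynomial.eval (Sum.elim q fun _ => a)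
      (MvPolynomial.pderiv (Sum.inr j) (genericMonic d)))
    (by rw [Matrix.of_apply, eval_pderiv_genericMonic]; exact hsimple.isUnit)
  obtain ⟨U', V', g, hU'open, -, hqU', haV', hg, hgV', hiff⟩ :=
    hIFT d 1 hd le_rfl (fun _ => genericMonic d) q (fun _ => a) hzero hunit
  have hgq : g q 0 = a := congrFun ((hiff q hqU' _ haV').mp hzero).symm 0
  have hg0 : ContinuousAt (fun x => g x 0) q :=
    (continuous_apply 0).continuousAt.comp (hg.continuousAt (hU'open.mem_nhds hqU'))
  refine ⟨U' ∩ (fun x => g x 0) ⁻¹' U,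
    Filter.inter_mem (hU'open.mem_nhds hqU') (hg0 (by rwa [← hgq] at hU)), fun p hp => ⟨g p 0, hp.2, ?_⟩⟩
  have hp0 := (hiff p hp.1 (g p) (hgV' p hp.1)).mpr rfl 0
  rwa [eval_genericMonic] at hp0

/-- If a topological field (addition and multiplication continuous) satisfies the
polynomial implicit function theorem, then it satisfies continuity of simple roots. -/
theorem stmt5 {K : Type*} [Field K] [TopologicalSpace K]
    [ContinuousAdd K] [ContinuousMul K]
    (hIFT : ∀ n m : ℕ, 1 ≤ n → 1 ≤ m →
      ∀ (F : Fin m → MvPolynomial (Fin n ⊕ Fin m) K) (a : Fin n → K) (b : Fin m → K),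
        (∀ i, MvPolynomial.eval (Sum.elim a b) (F i) = 0) →
        IsUnit (Matrix.of fun i j : Fin m =>
          MvPolynomial.eval (Sum.elim a b) (MvPolynomial.pderiv (Sum.inr j) (F i))) →
        ∃ (U : Set (Fin n → K)) (V : Set (Fin m → K)) (g : (Fin n → K) → (Fin m → K)),
          IsOpen U ∧ IsOpen V ∧ a ∈ U ∧ b ∈ V ∧ ContinuousOn g U ∧
          (∀ x ∈ U, g x ∈ V) ∧
          ∀ x ∈ U, ∀ y ∈ V,
            ((∀ i, MvPolynomial.eval (Sum.elim x y) (F i) = 0) ↔ y = g x)) :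
    ∀ d : ℕ, 1 ≤ d → ∀ q : Fin d → K, ∀ a : K,
      (monicOfCoeffs q).IsRoot a →
      Polynomial.eval a (Polynomial.derivative (monicOfCoeffs q)) ≠ 0 →
      ∀ U ∈ nhds a, ∃ V ∈ nhds q, ∀ p ∈ V, ∃ x ∈ U, (monicOfCoeffs p).IsRoot x :=
  stmt5_general hIFT
end

section
/- Let K be a field with algebraic closure K̄ and let Q₀ ∈ K[X] be a separable monic polynomial of degree d ≥ 1. Then the map P ↦ P ⋆ Q₀, from polynomials P ∈ K[X] of degree strictly less than d to K̄[X], is finite-to-one: for any fixed R ∈ K̄[X], the set {P ∈ K[X] : deg P < d and P ⋆ Q₀ = R} has at most d^d elements. -/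
/-- `P ⋆ Q`: the polynomial `∏ᵢ (X − P(rᵢ))` over the algebraic closure of `K`,
where `r₁,…,r_d` are the roots of `Q` in the algebraic closure, counted with
multiplicity. -/
noncomputable def starPoly (K : Type*) [Field K] (P Q : Polynomial K) :
    Polynomial (AlgebraicClosure K) :=
  (((Q.map (algebraMap K (AlgebraicClosure K))).roots).map
    fun r => Polynomial.X - Polynomial.C (Polynomial.aeval r P)).prod

open Polynomial in
/-- For `Q₀` separable monic of degree `d ≥ 1`, the map `P ↦ P ⋆ Q₀` on polynomials of
degree `< d` is finite-to-one, with fibers of size at most `d^d`. -/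
theorem stmt9 {K : Type*} [Field K] (d : ℕ) (hd : 1 ≤ d) (Q₀ : Polynomial K)
    (hQ : Q₀.Monic) (hdeg : Q₀.natDegree = d) (hsep : Q₀.Separable)
    (R : Polynomial (AlgebraicClosure K)) :
    {P : Polynomial K | P.degree < (d : WithBot ℕ) ∧ starPoly K P Q₀ = R}.Finite ∧
    {P : Polynomial K | P.degree < (d : WithBot ℕ) ∧ starPoly K P Q₀ = R}.ncard
      ≤ d ^ d := by
  classical
  set L := AlgebraicClosure K
  set f := algebraMap K L
  set S := {P : Polynomial K | P.degree < (d : WithBot ℕ) ∧ starPoly K P Q₀ = R} with hS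
  rcases Set.eq_empty_or_nonempty S with hemp | ⟨P₀, hP₀deg, hP₀⟩
  · rw [hemp]; simp
  set Qm := Q₀.map f with hQm
  have hQmmonic : Qm.Monic := hQ.map f
  have hQmdeg : Qm.natDegree = d := by rw [hQm, natDegree_map, hdeg]
  have hsplits : Qm.Splits := IsAlgClosed.splits Qm
  have hcard : Multiset.card Qm.roots = d := by
    rw [splits_iff_card_roots.mp hsplits, hQmdeg]
  have hnodup : Qm.roots.Nodup := nodup_roots (hsep.map)
  set t : Finset L := Qm.roots.toFinset with ht
  have htcard : t.card = d := by
    rw [ht, Multiset.toFinset_card_of_nodup hnodup, hcard]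
  -- R is monic of natDegree d
  have hRmonic : R.Monic := by
    rw [← hP₀]
    exact monic_multiset_prod_of_monic _ _ (fun r _ => monic_X_sub_C _)
  have hRdeg : R.natDegree = d := by
    rw [← hP₀, starPoly]
    rw [show (Qm.roots.map fun r => X - C (aeval r P₀)) =
        (Qm.roots.map fun r => aeval r P₀).map (fun a => X - C a) by
      rw [Multiset.map_map]; rfl]
    rw [natDegree_multiset_prod_X_sub_C_eq_card, Multiset.card_map, hcard]
  have hRne : R ≠ 0 := hRmonic.ne_zero
  -- values of P at roots are roots of R
  have hval : ∀ P ∈ S, ∀ r ∈ t, aeval r P ∈ R.roots.toFinset := by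
    intro P hP r hr
    rw [Multiset.mem_toFinset]
    rw [mem_roots hRne]
    rw [ht, Multiset.mem_toFinset] at hr
    obtain ⟨q, hq⟩ : (X - C (aeval r P)) ∣ R := by
      rw [← hP.2, starPoly]
      exact Multiset.dvd_prod (Multiset.mem_map_of_mem _ hr)
    rw [IsRoot, hq]
    simp
  -- injectivity
  set F : Polynomial K → ({x // x ∈ t} → L) := fun P r => aeval r.1 P with hF
  have hinj : Set.InjOn F S := by
    intro P₁ h₁ P₂ h₂ heq
    have hmap : P₁.map f = P₂.map f := by
      apply eq_of_degrees_lt_of_eval_finset_eq t ?_ ?_ ?_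
      · rw [degree_map, htcard]; exact h₁.1
      · rw [degree_map, htcard]; exact h₂.1
      · intro x hx
        simpa [hF, aeval_def, eval_map] using congrFun heq ⟨x, hx⟩
    exact Polynomial.map_injective f (algebraMap K L).injective hmap
  -- the image lies in a finite set
  set T : Finset ({x // x ∈ t} → L) :=
    Fintype.piFinset (fun _ => R.roots.toFinset) with hT
  have himg : F '' S ⊆ ↑T := by
    rintro _ ⟨P, hP, rfl⟩
    rw [Finset.mem_coe, hT, Fintype.mem_piFinset]
    exact fun r => hval P hP r.1 r.2
  have hfin : S.Finite :=
    Set.Finite.of_finite_image (T.finite_toSet.subset himg) hinj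
  refine ⟨hfin, ?_⟩
  have h1 : S.ncard = (F '' S).ncard := (Set.ncard_image_of_injOn hinj).symm
  have h2 : (F '' S).ncard ≤ T.card := by
    rw [← Set.ncard_coe_finset]
    exact Set.ncard_le_ncard himg T.finite_toSet
  have h3 : T.card = R.roots.toFinset.card ^ d := by
    rw [Fintype.card_piFinset]
    simp [Finset.prod_const, Fintype.card_coe, htcard]
  have h4 : R.roots.toFinset.card ≤ d := by
    calc R.roots.toFinset.card ≤ Multiset.card R.roots := Multiset.toFinset_card_le _
      _ ≤ R.natDegree := card_roots' R
      _ = d := hRdeg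
  rw [h1]
  calc (F '' S).ncard ≤ T.card := h2
    _ = R.roots.toFinset.card ^ d := h3
    _ ≤ d ^ d := Nat.pow_le_pow_left h4 d
end

section
/- Let K be a field with algebraic closure K̄, let Q₀ ∈ K[X] be a separable monic polynomial of degree d ≥ 1, and let P ∈ K[X] be such that P ⋆ Q₀ ∈ K̄[X] is separable. Then Q₀ has a root in K if and only if P ⋆ Q₀ has a root in the image of K in K̄ (i.e. there is a ∈ K whose image in K̄ is a root of P ⋆ Q₀). -/
/-- For `Q₀` separable monic of degree `d ≥ 1` such that `P ⋆ Q₀` is separable,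
`Q₀` has a root in `K` iff `P ⋆ Q₀` has a root in the image of `K`. -/
theorem stmt10 {K : Type*} [Field K] (d : ℕ) (hd : 1 ≤ d) (Q₀ : Polynomial K)
    (hQ : Q₀.Monic) (hdeg : Q₀.natDegree = d) (hsep : Q₀.Separable)
    (P : Polynomial K) (hPQ : (starPoly K P Q₀).Separable) :
    (∃ x : K, Q₀.IsRoot x) ↔
      ∃ a : K, (starPoly K P Q₀).IsRoot (algebraMap K (AlgebraicClosure K) a) := by
  classical
  set F := AlgebraicClosure K
  set φ := algebraMap K F with hφ
  set Qm := Q₀.map φ with hQm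
  have hQ0 : Q₀ ≠ 0 := hQ.ne_zero
  have hQm0 : Qm ≠ 0 := Polynomial.map_ne_zero hQ0
  -- roots of starPoly
  have hroots : (starPoly K P Q₀).roots = Qm.roots.map fun r => Polynomial.aeval r P := by
    have e : starPoly K P Q₀ =
        ((Qm.roots.map (fun r => Polynomial.aeval r P)).map
          (fun a => Polynomial.X - Polynomial.C a)).prod := by
      rw [Multiset.map_map]; rfl
    rw [e, Polynomial.roots_multiset_prod_X_sub_C]
  have hstar0 : starPoly K P Q₀ ≠ 0 := by
    apply Polynomial.Monic.ne_zero
    apply Polynomial.monic_multiset_prod_of_monic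
    intro r _
    exact Polynomial.monic_X_sub_C _
  have hnodup : ((starPoly K P Q₀).roots).Nodup := Polynomial.nodup_roots hPQ
  constructor
  · rintro ⟨x, hx⟩
    refine ⟨P.eval x, ?_⟩
    have hmem : φ x ∈ Qm.roots := by
      rw [Polynomial.mem_roots hQm0, Polynomial.IsRoot, Polynomial.eval_map,
        Polynomial.eval₂_hom, hx, map_zero]
    have : (Polynomial.aeval (φ x)) P ∈ (starPoly K P Q₀).roots := by
      rw [hroots]
      exact Multiset.mem_map_of_mem _ hmem
    have h2 : Polynomial.aeval (φ x) P = φ (P.eval x) := by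
      rw [Polynomial.aeval_algebraMap_apply]
      simp [Polynomial.aeval_def, hφ]
    rw [h2] at this
    exact Polynomial.isRoot_of_mem_roots this
  · rintro ⟨a, ha⟩
    -- find a root r of Qm with aeval r P = φ a
    have hmem : φ a ∈ (starPoly K P Q₀).roots := (Polynomial.mem_roots hstar0).mpr ha
    rw [hroots, Multiset.mem_map] at hmem
    obtain ⟨r, hrmem, hr⟩ := hmem
    -- gcd argument
    set g := EuclideanDomain.gcd Q₀ (P - Polynomial.C a) with hg
    have hg1 : g ∣ Q₀ := EuclideanDomain.gcd_dvd_left _ _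
    have hg2 : g ∣ (P - Polynomial.C a) := EuclideanDomain.gcd_dvd_right _ _
    -- r is a root of g.map φ
    have hrQ : Polynomial.eval r Qm = 0 := (Polynomial.mem_roots hQm0).mp hrmem
    have hrP : Polynomial.eval r ((P - Polynomial.C a).map φ) = 0 := by
      rw [Polynomial.map_sub, Polynomial.eval_sub, Polynomial.map_C, Polynomial.eval_C,
        ← hr, Polynomial.aeval_def, Polynomial.eval_map, sub_self]
    have hrg : Polynomial.eval r (g.map φ) = 0 := by
      have hbez := EuclideanDomain.gcd_eq_gcd_ab Q₀ (P - Polynomial.C a)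
      rw [hg, hbez]
      rw [Polynomial.map_add, Polynomial.map_mul, Polynomial.map_mul, Polynomial.eval_add,
        Polynomial.eval_mul, Polynomial.eval_mul, ← hQm, hrQ, hrP, zero_mul, zero_mul, add_zero]
    have hgn0 : g ≠ 0 := fun h =>
      hQ0 (EuclideanDomain.gcd_eq_zero_iff.mp h).1
    have hgm0 : g.map φ ≠ 0 := Polynomial.map_ne_zero hgn0
    have hgall : ∀ s ∈ (g.map φ).roots, s = r := by
      intro s hs
      have hs' : Polynomial.eval s (g.map φ) = 0 := (Polynomial.mem_roots hgm0).mp hs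
      have hsQ : s ∈ Qm.roots := by
        rw [Polynomial.mem_roots hQm0]
        obtain ⟨c, hc⟩ := hg1
        show Polynomial.eval s Qm = 0
        rw [hQm, hc, Polynomial.map_mul, Polynomial.eval_mul, hs', zero_mul]
      have hsP : Polynomial.aeval s P = φ a := by
        obtain ⟨c, hc⟩ := hg2
        have hz : Polynomial.eval s ((P - Polynomial.C a).map φ) = 0 := by
          rw [hc, Polynomial.map_mul, Polynomial.eval_mul, hs', zero_mul]
        rw [Polynomial.map_sub, Polynomial.eval_sub, Polynomial.map_C, Polynomial.eval_C,
          sub_eq_zero] at hz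
        rw [Polynomial.aeval_def, ← Polynomial.eval_map]
        exact hz
      have hinj := Multiset.inj_on_of_nodup_map (by rw [← hroots]; exact hnodup)
      exact hinj s hsQ r hrmem (by rw [hsP, hr])
    -- g.map φ is separable hence nodup roots; roots = {r}
    have hgsep : (g.map φ).Separable := (hsep.of_dvd hg1).map
    have hgroots : (g.map φ).roots = {r} := by
      have hrin : r ∈ (g.map φ).roots := by
        exact (Polynomial.mem_roots hgm0).mpr hrg
      have hnd : ((g.map φ).roots).Nodup := Polynomial.nodup_roots hgsep
      have hrep : (g.map φ).roots = Multiset.replicate (Multiset.card (g.map φ).roots) r :=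
        Multiset.eq_replicate_card.mpr hgall
      have hcard1 : Multiset.card (g.map φ).roots = 1 := by
        have hle : Multiset.card (g.map φ).roots ≤ 1 := by
          calc Multiset.card (g.map φ).roots
              = Multiset.count r (g.map φ).roots :=
                (Multiset.count_eq_card.mpr fun x hx => (hgall x hx).symm).symm
            _ ≤ 1 := Multiset.nodup_iff_count_le_one.mp hnd r
        have hge : 1 ≤ Multiset.card (g.map φ).roots :=
          Multiset.card_pos_iff_exists_mem.mpr ⟨r, hrin⟩
        omega
      rw [hrep, hcard1, Multiset.replicate_one]
    -- degree of g is 1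
    have hdeg1 : g.natDegree = 1 := by
      have hsplit : (g.map φ).Splits := IsAlgClosed.splits _
      have := (Polynomial.Splits.natDegree_eq_card_roots hsplit)
      rw [← Polynomial.natDegree_map φ, this, hgroots, Multiset.card_singleton]
    obtain ⟨c, hc0, b, hcb⟩ := Polynomial.natDegree_eq_one.mp hdeg1
    refine ⟨-b / c, ?_⟩
    have hgx : Polynomial.eval (-b / c) g = 0 := by
      rw [← hcb]
      simp only [Polynomial.eval_add, Polynomial.eval_mul, Polynomial.eval_C, Polynomial.eval_X]
      field_simp
      ring
    obtain ⟨h, hh⟩ := hg1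
    rw [Polynomial.IsRoot, hh, Polynomial.eval_mul, hgx, zero_mul]
end

section
/- Let G be a group, let U ⊆ G be a subset such that finitely many left translates of U cover G (i.e. there is a finite set F ⊆ G with G = ⋃_{a ∈ F} a·U), and let τ₀ be a topology on U. Suppose that for every a ∈ G the set (a·U) ∩ U is τ₀-open and the map x ↦ a·x from (a⁻¹·U) ∩ U to (a·U) ∩ U is τ₀-continuous. Then there is a topology τ on G such that: (i) U is τ-open and the subspace topology that τ induces on U equals τ₀; (ii) every left translation x ↦ a·x (a ∈ G) is τ-continuous; moreover the collection of sets of the form a·V, with a ∈ G and V ⊆ U τ₀-open, is a basis for τ. -/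
/-!
Take for `τ` the topology generated by the translates `a • V` of the open subsets `V` of `U`.
The hypotheses say that `U ∩ c • V` is open in `U` whenever `V` is, so the intersection
`a • V ∩ b • W = a • (V ∩ (a⁻¹ * b) • W)` of two generators is again a generator: they form
a basis. Then `U = 1 • U` is open, `τ` restricts to `τ₀` on `U`, and left translations permute
the generators.
-/

open Set TopologicalSpace

section

variable {G : Type*} [Group G]

theorem isOpen_preimage_val_image_mul_left {U : Set G} [TopologicalSpace U] {a : G}
    (hopen : IsOpen {x : U | a⁻¹ * (x : G) ∈ U})
    (hcont : Continuous fun x : {x : U | a⁻¹ * (x : G) ∈ U} => (⟨a⁻¹ * (x : G), x.2⟩ : U))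
    {V : Set U} (hV : IsOpen V) :
    IsOpen (((↑) : U → G) ⁻¹' ((fun x => a * x) '' (Subtype.val '' V))) := by
  convert hopen.isOpenMap_subtype_val _ (hV.preimage hcont) using 1
  ext y
  constructor
  · rintro ⟨_, ⟨v, hv, rfl⟩, hy⟩
    have hvy : a⁻¹ * (y : G) = v := by rw [← hy, inv_mul_cancel_left]
    exact ⟨⟨y, show a⁻¹ * (y : G) ∈ U from hvy ▸ v.2⟩, by simpa [hvy] using hv, rfl⟩
  · rintro ⟨⟨y', hy'⟩, hy'V, rfl⟩
    exact ⟨_, ⟨_, hy'V, rfl⟩, mul_inv_cancel_left a _⟩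

def translatesOfOpen (U : Set G) [TopologicalSpace U] : Set (Set G) :=
  {S | ∃ (a : G) (V : Set U), IsOpen V ∧ S = (fun x => a * x) '' (Subtype.val '' V)}

variable {U : Set G} [TopologicalSpace U]

theorem preimage_mul_left_mem_translatesOfOpen {S : Set G} (hS : S ∈ translatesOfOpen U)
    (a : G) : (fun x => a * x) ⁻¹' S ∈ translatesOfOpen U := by
  obtain ⟨b, V, hV, rfl⟩ := hS
  refine ⟨a⁻¹ * b, V, hV, ?_⟩
  rw [image_mul_left, image_mul_left, preimage_preimage]
  simp [mul_assoc]

theorem inter_mem_translatesOfOpen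
    (htranslate : ∀ (a : G) (V : Set U), IsOpen V →
      IsOpen (((↑) : U → G) ⁻¹' ((fun x => a * x) '' (Subtype.val '' V))))
    {S T : Set G} (hS : S ∈ translatesOfOpen U) (hT : T ∈ translatesOfOpen U) :
    S ∩ T ∈ translatesOfOpen U := by
  obtain ⟨a, V, hV, rfl⟩ := hS
  obtain ⟨b, W, hW, rfl⟩ := hT
  refine ⟨a, V ∩ ((↑) : U → G) ⁻¹' ((fun x => a⁻¹ * b * x) '' (Subtype.val '' W)),
    hV.inter (htranslate _ W hW), ?_⟩
  rw [image_inter_preimage, image_inter (mul_right_injective a)]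
  simp only [image_image, mul_assoc, mul_inv_cancel_left]

theorem sUnion_translatesOfOpen (hU : U.Nonempty) : ⋃₀ translatesOfOpen U = univ := by
  obtain ⟨u, hu⟩ := hU
  refine eq_univ_of_forall fun x => ⟨_, ⟨x * u⁻¹, univ, isOpen_univ, rfl⟩, ?_⟩
  exact ⟨u, ⟨⟨u, hu⟩, trivial, rfl⟩, inv_mul_cancel_right x u⟩

theorem isTopologicalBasis_translatesOfOpen
    (htranslate : ∀ (a : G) (V : Set U), IsOpen V →
      IsOpen (((↑) : U → G) ⁻¹' ((fun x => a * x) '' (Subtype.val '' V))))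
    (hU : U.Nonempty) :
    @IsTopologicalBasis G (generateFrom (translatesOfOpen U)) (translatesOfOpen U) :=
  @IsTopologicalBasis.mk _ (generateFrom _) _
    (fun _ hS _ hT _ hx => ⟨_, inter_mem_translatesOfOpen htranslate hS hT, hx, subset_rfl⟩)
    (sUnion_translatesOfOpen hU) rfl

theorem induced_val_generateFrom_translatesOfOpen
    (htranslate : ∀ (a : G) (V : Set U), IsOpen V →
      IsOpen (((↑) : U → G) ⁻¹' ((fun x => a * x) '' (Subtype.val '' V)))) :
    induced ((↑) : U → G) (generateFrom (translatesOfOpen U)) = ‹TopologicalSpace U› := by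
  rw [induced_generateFrom_eq]
  refine le_antisymm (fun V hV => isOpen_generateFrom_of_mem ?_) (le_generateFrom ?_)
  · exact ⟨_, ⟨1, V, hV, rfl⟩, by simp [preimage_image_eq _ Subtype.val_injective]⟩
  · rintro _ ⟨_, ⟨a, V, hV, rfl⟩, rfl⟩
    exact htranslate a V hV

theorem continuous_mul_left_generateFrom_translatesOfOpen (a : G) :
    @Continuous G G (generateFrom (translatesOfOpen U)) (generateFrom (translatesOfOpen U))
      (fun x => a * x) :=
  continuous_generateFrom_iff.2 fun _ hS =>
    isOpen_generateFrom_of_mem (preimage_mul_left_mem_translatesOfOpen hS a)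

end

/-- Extending a suitably translation-compatible topology on a subset `U` of a group `G`,
finitely many left translates of which cover `G`, to a left-invariant topology on `G`
in which `U` is open with its original topology, with basis the left translates of the
open subsets of `U`. -/
theorem stmt12 {G : Type*} [Group G] (U : Set G) (F : Finset G)
    (hcov : (⋃ a ∈ F, (fun x => a * x) '' U) = Set.univ)
    (τ₀ : TopologicalSpace ↥U)
    (hopen : ∀ a : G, @IsOpen ↥U τ₀ {x : ↥U | a⁻¹ * (x : G) ∈ U})
    (hcont : ∀ a : G,
      @Continuous {x : ↥U | a * (x : G) ∈ U} ↥U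
        (TopologicalSpace.induced
          (Subtype.val : {x : ↥U | a * (x : G) ∈ U} → ↥U) τ₀) τ₀
        (fun x => (⟨a * (x : G), x.2⟩ : ↥U))) :
    ∃ τ : TopologicalSpace G,
      (@IsOpen G τ U ∧ TopologicalSpace.induced (Subtype.val : ↥U → G) τ = τ₀) ∧
      (∀ a : G, @Continuous G G τ τ fun x => a * x) ∧
      @TopologicalSpace.IsTopologicalBasis G τ
        {S : Set G | ∃ (a : G) (V : Set ↥U), @IsOpen ↥U τ₀ V ∧
          S = (fun x => a * x) '' (Subtype.val '' V)} := by
  let := τ₀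
  have htranslate (a : G) (V : Set U) (hV : IsOpen V) :
      IsOpen (((↑) : U → G) ⁻¹' ((fun x => a * x) '' (Subtype.val '' V))) :=
    isOpen_preimage_val_image_mul_left (hopen a) (hcont a⁻¹) hV
  have hU : U.Nonempty := by
    obtain ⟨_, _, u, hu, -⟩ := mem_iUnion₂.1 (hcov ▸ mem_univ (1 : G))
    exact ⟨u, hu⟩
  refine ⟨generateFrom (translatesOfOpen U), ⟨?_, ?_⟩, ?_, ?_⟩
  · exact isOpen_generateFrom_of_mem ⟨1, univ, isOpen_univ, by simp⟩
  · exact induced_val_generateFrom_translatesOfOpen htranslate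
  · exact continuous_mul_left_generateFrom_translatesOfOpen
  · exact isTopologicalBasis_translatesOfOpen htranslate hU
end

section
/- Under Assumption A, for every n ≥ 1 and every nonzero polynomial P ∈ K[X₁,…,Xₙ], the zero set V(P) = {x ∈ K^n : P(x) = 0} satisfies dim(V(P)) < dim(K^n). -/
open FirstOrder

namespace Stmt17Aux

open FirstOrder.Language Set

set_option linter.unusedSectionVars false

variable {K : Type*} [Field K] {L : FirstOrder.Language} [L.Structure K]

lemma defEqConst {k : ℕ} (i : Fin k) (c : K) :
    Set.Definable (Set.univ : Set K) L {v : Fin k → K | v i = c} :=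
  ⟨Term.equal (Term.var i)
      (Constants.term (L.con (⟨c, Set.mem_univ c⟩ : (Set.univ : Set K)))), by
    ext v
    simp [Formula.realize_equal, Term.realize_constants]⟩

/-- definability of V(P) from the graph -/
lemma defVP {n : ℕ} (P : MvPolynomial (Fin n) K)
    (hG : Set.Definable (Set.univ : Set K) L
      {v : Fin (n+1) → K |
        MvPolynomial.eval (fun i => v i.castSucc) P = v (Fin.last n)}) :
    Set.Definable (Set.univ : Set K) L
      {x : Fin n → K | MvPolynomial.eval x P = 0} := by
  have hS := hG.inter (defEqConst (L := L) (Fin.last n) (0 : K))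
  have himg := hS.image_comp (Fin.castSucc : Fin n → Fin (n+1))
  convert himg using 1
  ext x
  simp only [Set.mem_setOf_eq, Set.mem_image, Set.mem_inter_iff, Function.comp]
  constructor
  · intro hx
    refine ⟨Fin.snoc x 0, ⟨?_, ?_⟩, ?_⟩
    · simpa [Fin.snoc_castSucc, Fin.snoc_last] using hx
    · simp
    · funext j; simp [Fin.snoc_castSucc]
  · rintro ⟨v, ⟨hg, h0⟩, rfl⟩
    have hcomp : v ∘ Fin.castSucc = fun i => v i.castSucc := rfl
    rw [hcomp, hg, h0]

/-- every nonempty open subset of K is infinite -/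
lemma open_infinite
    (dim : ∀ n : ℕ, Set (Fin n → K) → WithBot ℕ)
    [TopologicalSpace K]
    (h2 : 0 < dim 1 (Set.univ : Set (Fin 1 → K)))
    (h3 : ∀ (n : ℕ) (X : Set (Fin n → K)), Set.Definable Set.univ L X →
      0 < dim n X → X.Infinite)
    (hbasis : ∃ (m : ℕ) (D : Set (Fin (m + 1) → K)),
      Set.Definable Set.univ L D ∧
      TopologicalSpace.IsTopologicalBasis
        {W : Set K | ∃ y : Fin m → K, W = {b : K | Fin.snoc y b ∈ D}})
    (h7 : ∀ (n : ℕ) (X : Set (Fin n → K)), Set.Definable Set.univ L X →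
      ((interior X).Nonempty ↔ dim n X = dim n (Set.univ : Set (Fin n → K)))) :
    ∀ U : Set K, IsOpen U → U.Nonempty → U.Infinite := by
  obtain ⟨m, D, hD, hbas⟩ := hbasis
  rintro U hU ⟨u, hu⟩
  obtain ⟨W, hWmem, huW, hWU⟩ := hbas.exists_subset_of_mem_open hu hU
  obtain ⟨y, rfl⟩ := hWmem
  set W : Set K := {b : K | Fin.snoc y b ∈ D} with hWdef
  have hWopen : IsOpen W := hbas.isOpen ⟨y, rfl⟩
  set W' : Set (Fin 1 → K) := (fun v : Fin 1 → K => v 0) ⁻¹' W with hW'def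
  -- definability of W'
  have hIdef : Set.Definable (Set.univ : Set K) L
      (⋂ i : Fin m, {v : Fin (m+1) → K | v (Fin.castSucc i) = y i}) := by
    have h := Set.definable_biInter_finset
      (f := fun i : Fin m => {v : Fin (m+1) → K | v (Fin.castSucc i) = y i})
      (fun i => defEqConst (L := L) (Fin.castSucc i) (y i)) Finset.univ
    convert h using 1
    ext v
    simp
  have hS := hD.inter hIdef
  have himg := hS.image_comp (fun _ : Fin 1 => Fin.last m)
  have hW'def2 : Set.Definable (Set.univ : Set K) L W' := by
    convert himg using 1
    ext g
    simp only [hW'def, Set.mem_preimage, hWdef, Set.mem_setOf_eq, Set.mem_image,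
      Set.mem_inter_iff, Set.mem_iInter, Function.comp]
    constructor
    · intro hg
      refine ⟨Fin.snoc y (g 0), ⟨hg, fun i => by simp [Fin.snoc_castSucc]⟩, ?_⟩
      funext j
      have : j = 0 := Subsingleton.elim j 0
      rw [this]
      simp [Fin.snoc_last]
    · rintro ⟨w, ⟨hwD, hwI⟩, rfl⟩
      have hw : Fin.snoc y (w (Fin.last m)) = w := by
        funext j
        induction j using Fin.lastCases with
        | last => simp [Fin.snoc_last]
        | cast i => simp [Fin.snoc_castSucc, hwI i]
      simpa only [Function.comp_apply, hw] using hwD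
  -- W' is open and nonempty
  have hW'open : IsOpen W' := hWopen.preimage (continuous_apply 0)
  have hW'ne : W'.Nonempty := ⟨fun _ => u, huW⟩
  have hdim : dim 1 W' = dim 1 (Set.univ : Set (Fin 1 → K)) :=
    (h7 1 W' hW'def2).1 (by rwa [hW'open.interior_eq])
  have hW'inf : W'.Infinite := h3 1 W' hW'def2 (hdim ▸ h2)
  have himgW : ((fun v : Fin 1 → K => v 0) '' W').Infinite := by
    apply hW'inf.image
    intro a _ b _ hab
    funext j
    have : j = 0 := Subsingleton.elim j 0
    rw [this]; exact hab
  apply himgW.mono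
  intro b hb
  obtain ⟨v, hv, rfl⟩ := hb
  exact hWU hv

/-- a polynomial vanishing on a nonempty open set is zero -/
lemma vanish_zero {K : Type*} [Field K] [TopologicalSpace K]
    (hopen : ∀ U : Set K, IsOpen U → U.Nonempty → U.Infinite) :
    ∀ (n : ℕ) (P : MvPolynomial (Fin n) K) (O : Set (Fin n → K)),
      IsOpen O → O.Nonempty → (∀ x ∈ O, MvPolynomial.eval x P = 0) → P = 0 := by
  intro n
  induction n with
  | zero =>
      rintro P O _ ⟨x, hx⟩ hv
      have h0 := hv x hx
      rw [MvPolynomial.eq_C_of_isEmpty P, MvPolynomial.eval_C] at h0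
      rw [MvPolynomial.eq_C_of_isEmpty P, h0, map_zero]
  | succ n ih =>
      rintro P O hO ⟨x, hx⟩ hv
      set Q := MvPolynomial.finSuccEquiv K n P with hQdef
      have hcont : Continuous (fun z : K × (Fin n → K) => (Fin.cons z.1 z.2 : Fin (n+1) → K)) := by
        apply continuous_pi
        intro j
        induction j using Fin.cases with
        | zero => simpa using continuous_fst
        | succ i => simpa [Function.comp_def] using (continuous_apply i).comp continuous_snd
      have hxO : (Fin.cons (x 0) (Fin.tail x) : Fin (n+1) → K) ∈ O := by
        rw [Fin.cons_self_tail]; exact hx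
      obtain ⟨U, V, hUo, hVo, hxU, hxV, hUV⟩ :=
        isOpen_prod_iff.1 (hO.preimage hcont) (x 0) (Fin.tail x) hxO
      have key : ∀ s ∈ V, ∀ i, MvPolynomial.eval s (Q.coeff i) = 0 := by
        intro s hs i
        have hq : Polynomial.map (MvPolynomial.eval s) Q = 0 := by
          apply Polynomial.eq_zero_of_infinite_isRoot
          apply (hopen U hUo ⟨_, hxU⟩).mono
          intro a ha
          have hmem : (Fin.cons a s : Fin (n+1) → K) ∈ O := hUV (Set.mk_mem_prod ha hs)
          have h0 := hv _ hmem
          rw [MvPolynomial.eval_eq_eval_mv_eval'] at h0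
          exact h0
        have := congrArg (fun r => Polynomial.coeff r i) hq
        simpa [Polynomial.coeff_map] using this
      have hQ : Q = 0 := Polynomial.ext fun i => by
        simpa using ih (Q.coeff i) V hVo ⟨_, hxV⟩ (fun s hs => key s hs i)
      have := (MvPolynomial.finSuccEquiv K n).injective
        (a₁ := P) (a₂ := 0) (by rw [← hQdef, hQ, map_zero])
      exact this


lemma defGraph {n : ℕ}
    (defAdd : Set.Definable (Set.univ : Set K) L {v : Fin 3 → K | v 0 + v 1 = v 2})
    (defMul : Set.Definable (Set.univ : Set K) L {v : Fin 3 → K | v 0 * v 1 = v 2})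
    (P : MvPolynomial (Fin n) K) :
    Set.Definable (Set.univ : Set K) L
      {v : Fin (n+1) → K |
        MvPolynomial.eval (fun i => v i.castSucc) P = v (Fin.last n)} := by
  induction P using MvPolynomial.induction_on with
  | C a =>
      have h := defEqConst (L := L) (Fin.last n) a
      convert h using 1
      ext v
      simp [eq_comm]
  | add p q hp hq =>
      have h1 := hp.preimage_comp
        (Fin.snoc (fun i : Fin n => i.castSucc.castSucc.castSucc)
          (Fin.last (n+1)).castSucc : Fin (n+1) → Fin (n+3))
      have h2 := hq.preimage_comp
        (Fin.snoc (fun i : Fin n => i.castSucc.castSucc.castSucc)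
          (Fin.last (n+2)) : Fin (n+1) → Fin (n+3))
      have h3 := defAdd.preimage_comp
        (![(Fin.last (n+1)).castSucc, Fin.last (n+2),
            (Fin.last n).castSucc.castSucc] : Fin 3 → Fin (n+3))
      have hS := (h1.inter h2).inter h3
      have himg := hS.image_comp (fun j : Fin (n+1) => j.castSucc.castSucc)
      convert himg using 1
      ext v
      simp only [Set.mem_setOf_eq, Set.mem_image, Set.mem_inter_iff, Set.mem_preimage,
        Function.comp]
      constructor
      · intro hv
        refine ⟨Fin.snoc (Fin.snoc v (MvPolynomial.eval (fun i => v i.castSucc) p))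
            (MvPolynomial.eval (fun i => v i.castSucc) q), ⟨⟨?_, ?_⟩, ?_⟩, ?_⟩
        · simp [Fin.snoc_castSucc, Fin.snoc_last]
        · simp [Fin.snoc_castSucc, Fin.snoc_last]
        · simp only [Set.mem_setOf_eq, Matrix.cons_val_zero, Matrix.cons_val_one,
            Matrix.head_cons, Matrix.cons_val_two, Matrix.tail_cons,
            Fin.snoc_castSucc, Fin.snoc_last]
          rw [map_add] at hv
          exact hv
        · funext j
          simp [Fin.snoc_castSucc]
      · rintro ⟨w, ⟨⟨hwp, hwq⟩, hwa⟩, rfl⟩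
        simp only [Set.mem_setOf_eq, Fin.snoc_castSucc, Fin.snoc_last] at hwp hwq
        simp only [Set.mem_setOf_eq, Matrix.cons_val_zero, Matrix.cons_val_one,
          Matrix.head_cons, Matrix.cons_val_two, Matrix.tail_cons] at hwa
        simp only [Set.mem_setOf_eq, Function.comp_apply, map_add]
        rw [hwp, hwq]
        exact hwa
  | mul_X p i hp =>
      have h1 := hp.preimage_comp
        (Fin.snoc (fun i : Fin n => i.castSucc.castSucc)
          (Fin.last (n+1)) : Fin (n+1) → Fin (n+2))
      have h3 := defMul.preimage_comp
        (![Fin.last (n+1), i.castSucc.castSucc,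
            (Fin.last n).castSucc] : Fin 3 → Fin (n+2))
      have hS := h1.inter h3
      have himg := hS.image_comp (fun j : Fin (n+1) => j.castSucc)
      convert himg using 1
      ext v
      simp only [Set.mem_setOf_eq, Set.mem_image, Set.mem_inter_iff, Set.mem_preimage,
        Function.comp]
      constructor
      · intro hv
        refine ⟨Fin.snoc v (MvPolynomial.eval (fun i => v i.castSucc) p), ⟨?_, ?_⟩, ?_⟩
        · simp [Fin.snoc_castSucc, Fin.snoc_last]
        · simp only [Set.mem_setOf_eq, Matrix.cons_val_zero, Matrix.cons_val_one,
            Matrix.head_cons, Matrix.cons_val_two, Matrix.tail_cons,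
            Fin.snoc_castSucc, Fin.snoc_last]
          rw [map_mul, MvPolynomial.eval_X] at hv
          exact hv
        · funext j
          simp [Fin.snoc_castSucc]
      · rintro ⟨w, ⟨hwp, hwm⟩, rfl⟩
        simp only [Set.mem_setOf_eq, Fin.snoc_castSucc, Fin.snoc_last] at hwp
        simp only [Set.mem_setOf_eq, Matrix.cons_val_zero, Matrix.cons_val_one,
          Matrix.head_cons, Matrix.cons_val_two, Matrix.tail_cons] at hwm
        simp only [Set.mem_setOf_eq, Function.comp_apply, map_mul, MvPolynomial.eval_X]
        rw [hwp]
        exact hwm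


end Stmt17Aux

/-- Under Assumption A, the zero set of a nonzero polynomial in `n` variables has
dimension strictly less than `dim(K^n)`. -/
theorem stmt17 {K : Type*} [Field K] (L : FirstOrder.Language) [L.Structure K]
    [TopologicalSpace K] [IsTopologicalRing K]
    (hinv : ContinuousOn (fun x : K => x⁻¹) {(0 : K)}ᶜ)
    (defAdd : Set.Definable (Set.univ : Set K) L {v : Fin 3 → K | v 0 + v 1 = v 2})
    (defMul : Set.Definable (Set.univ : Set K) L {v : Fin 3 → K | v 0 * v 1 = v 2})
    (dim : ∀ n : ℕ, Set (Fin n → K) → WithBot ℕ)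
    (h1 : ∀ (n : ℕ) (X : Set (Fin n → K)), Set.Definable Set.univ L X →
      (dim n X = ⊥ ↔ X = ∅))
    (h2 : 0 < dim 1 (Set.univ : Set (Fin 1 → K)))
    (h3 : ∀ (n : ℕ) (X : Set (Fin n → K)), Set.Definable Set.univ L X →
      0 < dim n X → X.Infinite)
    (h4 : ∀ (n m : ℕ) (X : Set (Fin n → K)) (Y : Set (Fin m → K)),
      Set.Definable Set.univ L X → Set.Definable Set.univ L Y →
      dim (n + m) {v : Fin (n + m) → K |
          (fun i => v (Fin.castAdd m i)) ∈ X ∧ (fun j => v (Fin.natAdd n j)) ∈ Y}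
        = dim n X + dim m Y)
    (h5 : ∀ (n : ℕ) (X Y : Set (Fin n → K)), Set.Definable Set.univ L X →
      Set.Definable Set.univ L Y → dim n (X ∪ Y) = max (dim n X) (dim n Y))
    (h6 : ∀ (n m : ℕ) (X : Set (Fin n → K)) (Y : Set (Fin m → K))
      (f : (Fin n → K) → (Fin m → K)),
      Set.Definable Set.univ L X → Set.Definable Set.univ L Y →
      Set.Definable Set.univ L {v : Fin (n + m) → K |
        (fun i => v (Fin.castAdd m i)) ∈ X ∧
        f (fun i => v (Fin.castAdd m i)) = fun j => v (Fin.natAdd n j)} →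
      f '' X = Y → (∀ y ∈ Y, {x ∈ X | f x = y}.Finite) → dim n X = dim m Y)
    (hbasis : ∃ (m : ℕ) (D : Set (Fin (m + 1) → K)),
      Set.Definable Set.univ L D ∧
      TopologicalSpace.IsTopologicalBasis
        {W : Set K | ∃ y : Fin m → K, W = {b : K | Fin.snoc y b ∈ D}})
    (h7 : ∀ (n : ℕ) (X : Set (Fin n → K)), Set.Definable Set.univ L X →
      ((interior X).Nonempty ↔ dim n X = dim n (Set.univ : Set (Fin n → K))))
    :
    ∀ n : ℕ, 1 ≤ n → ∀ P : MvPolynomial (Fin n) K, P ≠ 0 →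
      dim n {x : Fin n → K | MvPolynomial.eval x P = 0}
        < dim n (Set.univ : Set (Fin n → K)) := by
  intro n _hn P hP
  have hG := Stmt17Aux.defGraph defAdd defMul P
  have defV := Stmt17Aux.defVP P hG
  have hle : dim n {x : Fin n → K | MvPolynomial.eval x P = 0}
      ≤ dim n (Set.univ : Set (Fin n → K)) := by
    have h := h5 n {x : Fin n → K | MvPolynomial.eval x P = 0} Set.univ defV
      (Set.definable_univ)
    rw [Set.union_univ] at h
    exact (le_max_left _ _).trans h.ge
  refine lt_of_le_of_ne hle ?_
  intro heq
  obtain ⟨x, hx⟩ := (h7 n _ defV).2 heq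
  have hopen := Stmt17Aux.open_infinite dim h2 h3 hbasis h7
  exact hP (Stmt17Aux.vanish_zero hopen n P
    (interior {x : Fin n → K | MvPolynomial.eval x P = 0}) isOpen_interior ⟨x, hx⟩
    (fun z hz => by have h : z ∈ {x : Fin n → K | MvPolynomial.eval x P = 0} := interior_subset hz; exact h))
end

section
/- Under Assumption A, for every n ≥ 1 and every definable set X ⊆ K^n, the topological boundary bd(X) (the closure of X minus the interior of X, with respect to the product topology induced by τ on K^n) satisfies dim(bd(X)) < dim(K^n). -/
open Set TopologicalSpace

/-- Characterization of the closure via a definable basis. -/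
lemma closure_char {K : Type*} [TopologicalSpace K] {m n : ℕ} {D : Set (Fin (m + 1) → K)}
    (hB : IsTopologicalBasis {W : Set K | ∃ y : Fin m → K, W = {b : K | Fin.snoc y b ∈ D}})
    (X : Set (Fin n → K)) :
    closure X = {x : Fin n → K | ∀ y : Fin n → Fin m → K,
      (∀ i, Fin.snoc (y i) (x i) ∈ D) → ∃ z ∈ X, ∀ i, Fin.snoc (y i) (z i) ∈ D} := by
  ext x
  constructor
  · intro hx y hy
    have hUopen : IsOpen {z : Fin n → K | ∀ i, Fin.snoc (y i) (z i) ∈ D} := by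
      have : {z : Fin n → K | ∀ i, Fin.snoc (y i) (z i) ∈ D}
          = Set.pi Set.univ (fun i => {b : K | Fin.snoc (y i) b ∈ D}) := by
        ext z; simp [Set.mem_pi]
      rw [this]
      exact isOpen_set_pi Set.finite_univ (fun i _ => hB.isOpen ⟨y i, rfl⟩)
    obtain ⟨z, hz1, hz2⟩ := (mem_closure_iff.1 hx) _ hUopen hy
    exact ⟨z, hz2, hz1⟩
  · intro h
    rw [mem_closure_iff]
    intro o ho hxo
    have hBpi := isTopologicalBasis_pi (fun _ : Fin n => hB)
    obtain ⟨V, ⟨U, F, hUT, rfl⟩, hxV, hVo⟩ := hBpi.exists_subset_of_mem_open hxo ho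
    have hy1 : ∀ i : Fin n, ∃ y : Fin m → K,
        x i ∈ {b : K | Fin.snoc y b ∈ D} ∧ (i ∈ F → U i = {b : K | Fin.snoc y b ∈ D}) := by
      intro i
      by_cases hi : i ∈ F
      · obtain ⟨y, hy⟩ := hUT i hi
        exact ⟨y, hy ▸ hxV i hi, fun _ => hy⟩
      · obtain ⟨W, ⟨y, rfl⟩, hxW, -⟩ :=
          hB.exists_subset_of_mem_open (Set.mem_univ (x i)) isOpen_univ
        exact ⟨y, hxW, fun h' => absurd h' hi⟩
    choose y hy2 hy3 using hy1
    obtain ⟨z, hzX, hz⟩ := h y hy2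
    refine ⟨z, hVo fun i hi => ?_, hzX⟩
    rw [hy3 i hi]
    exact hz i

/-- The closure-characterizing set is definable. -/
lemma def_closure_char {K : Type*} [Field K] {L : FirstOrder.Language} [L.Structure K]
    {m n : ℕ} {D : Set (Fin (m + 1) → K)} (hD : Set.Definable Set.univ L D)
    {X : Set (Fin n → K)} (hX : Set.Definable Set.univ L X) :
    Set.Definable Set.univ L {x : Fin n → K | ∀ y : Fin n → Fin m → K,
      (∀ i, Fin.snoc (y i) (x i) ∈ D) → ∃ z ∈ X, ∀ i, Fin.snoc (y i) (z i) ∈ D} := by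
  classical
  have hUdef : Set.Definable Set.univ L
      ((fun g : ((Fin n ⊕ Fin n × Fin m) ⊕ Fin n) → K =>
          g ∘ (Sum.inr : Fin n → (Fin n ⊕ Fin n × Fin m) ⊕ Fin n)) ⁻¹' X ∩
        ⋂ i ∈ Finset.univ, (fun g : ((Fin n ⊕ Fin n × Fin m) ⊕ Fin n) → K =>
          g ∘ Fin.snoc (fun j => Sum.inl (Sum.inr (i, j))) (Sum.inr i)) ⁻¹' D) :=
    (hX.preimage_comp _).inter (Set.definable_biInter_finset (fun _ => hD.preimage_comp _) _)
  have hEdef := hUdef.image_comp (Sum.inl : (Fin n ⊕ Fin n × Fin m) → (Fin n ⊕ Fin n × Fin m) ⊕ Fin n)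
  have hPdef : Set.Definable Set.univ L
      (⋂ i ∈ Finset.univ, (fun w : (Fin n ⊕ Fin n × Fin m) → K =>
        w ∘ Fin.snoc (fun j => Sum.inr (i, j)) (Sum.inl i)) ⁻¹' D) :=
    Set.definable_biInter_finset (fun _ => hD.preimage_comp _) _
  have hRdef := hPdef.compl.union hEdef
  have hTdef := (hRdef.compl.image_comp (Sum.inl : Fin n → Fin n ⊕ Fin n × Fin m)).compl
  convert hTdef using 1
  ext x
  simp only [Set.mem_setOf_eq, Set.mem_compl_iff, Set.mem_image, not_exists, not_and,
    Set.mem_union, Set.mem_inter_iff, Set.mem_iInter, Set.mem_preimage, not_forall, not_not]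
  constructor
  · intro hx w hwRc hwx
    refine absurd ?_ hwRc
    by_cases hwP : ∀ i : Fin n,
        w ∘ Fin.snoc (fun j => Sum.inr (i, j)) (Sum.inl i) ∈ D
    · have hyD : ∀ i, Fin.snoc (fun j => w (Sum.inr (i, j))) (x i) ∈ D := by
        intro i
        have hi := hwP i
        rw [Fin.comp_snoc] at hi
        have hxw : w (Sum.inl i) = x i := congrFun hwx i
        rwa [hxw] at hi
      obtain ⟨z, hzX, hz⟩ := hx _ hyD
      refine Or.inr ⟨Sum.elim w z, ⟨hzX, fun i _ => ?_⟩, funext fun t => rfl⟩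
      rw [Fin.comp_snoc]
      exact hz i
    · obtain ⟨i, hi⟩ := not_forall.1 hwP
      exact Or.inl ⟨i, Finset.mem_univ i, hi⟩
  · intro hx y hy
    have hwR : (∃ i, ∃ _ : i ∈ Finset.univ,
          (Sum.elim x (fun p : Fin n × Fin m => y p.1 p.2)) ∘
            Fin.snoc (fun j => Sum.inr (i, j)) (Sum.inl i) ∉ D) ∨
        ∃ g : ((Fin n ⊕ Fin n × Fin m) ⊕ Fin n) → K,
          (g ∘ Sum.inr ∈ X ∧ ∀ i ∈ Finset.univ,
            g ∘ Fin.snoc (fun j => Sum.inl (Sum.inr (i, j))) (Sum.inr i) ∈ D) ∧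
          g ∘ Sum.inl = Sum.elim x (fun p : Fin n × Fin m => y p.1 p.2) := by
      by_contra hcon
      exact hx _ hcon (funext fun i => rfl)
    rcases hwR with ⟨i, _, hwR⟩ | ⟨g, ⟨hgX, hgS⟩, hgw⟩
    · exfalso
      apply hwR
      rw [Fin.comp_snoc]
      exact hy i
    · refine ⟨fun i => g (Sum.inr i), hgX, fun i => ?_⟩
      have hgi := hgS i (Finset.mem_univ i)
      rw [Fin.comp_snoc] at hgi
      have h1 : (g ∘ fun j => Sum.inl (Sum.inr (i, j))) = y i := by
        funext j
        exact congrFun hgw (Sum.inr (i, j))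
      show Fin.snoc (y i) (g (Sum.inr i)) ∈ D
      rwa [h1] at hgi

/-- Under Assumption A, the topological boundary (frontier) of a definable set
`X ⊆ K^n` has dimension strictly less than `dim(K^n)`. -/
theorem stmt18 {K : Type*} [Field K] (L : FirstOrder.Language) [L.Structure K]
    [TopologicalSpace K] [IsTopologicalRing K]
    (hinv : ContinuousOn (fun x : K => x⁻¹) {(0 : K)}ᶜ)
    (defAdd : Set.Definable (Set.univ : Set K) L {v : Fin 3 → K | v 0 + v 1 = v 2})
    (defMul : Set.Definable (Set.univ : Set K) L {v : Fin 3 → K | v 0 * v 1 = v 2})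
    (dim : ∀ n : ℕ, Set (Fin n → K) → WithBot ℕ)
    (h1 : ∀ (n : ℕ) (X : Set (Fin n → K)), Set.Definable Set.univ L X →
      (dim n X = ⊥ ↔ X = ∅))
    (h2 : 0 < dim 1 (Set.univ : Set (Fin 1 → K)))
    (h3 : ∀ (n : ℕ) (X : Set (Fin n → K)), Set.Definable Set.univ L X →
      0 < dim n X → X.Infinite)
    (h4 : ∀ (n m : ℕ) (X : Set (Fin n → K)) (Y : Set (Fin m → K)),
      Set.Definable Set.univ L X → Set.Definable Set.univ L Y →
      dim (n + m) {v : Fin (n + m) → K |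
          (fun i => v (Fin.castAdd m i)) ∈ X ∧ (fun j => v (Fin.natAdd n j)) ∈ Y}
        = dim n X + dim m Y)
    (h5 : ∀ (n : ℕ) (X Y : Set (Fin n → K)), Set.Definable Set.univ L X →
      Set.Definable Set.univ L Y → dim n (X ∪ Y) = max (dim n X) (dim n Y))
    (h6 : ∀ (n m : ℕ) (X : Set (Fin n → K)) (Y : Set (Fin m → K))
      (f : (Fin n → K) → (Fin m → K)),
      Set.Definable Set.univ L X → Set.Definable Set.univ L Y →
      Set.Definable Set.univ L {v : Fin (n + m) → K |
        (fun i => v (Fin.castAdd m i)) ∈ X ∧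
        f (fun i => v (Fin.castAdd m i)) = fun j => v (Fin.natAdd n j)} →
      f '' X = Y → (∀ y ∈ Y, {x ∈ X | f x = y}.Finite) → dim n X = dim m Y)
    (hbasis : ∃ (m : ℕ) (D : Set (Fin (m + 1) → K)),
      Set.Definable Set.univ L D ∧
      TopologicalSpace.IsTopologicalBasis
        {W : Set K | ∃ y : Fin m → K, W = {b : K | Fin.snoc y b ∈ D}})
    (h7 : ∀ (n : ℕ) (X : Set (Fin n → K)), Set.Definable Set.univ L X →
      ((interior X).Nonempty ↔ dim n X = dim n (Set.univ : Set (Fin n → K))))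
    :
    ∀ n : ℕ, 1 ≤ n → ∀ X : Set (Fin n → K), Set.Definable Set.univ L X →
      dim n (frontier X) < dim n (Set.univ : Set (Fin n → K)) := by
  intro n _ X hX
  obtain ⟨m, D, hD, hB⟩ := hbasis
  have hcl : ∀ S : Set (Fin n → K), Set.Definable Set.univ L S →
      Set.Definable Set.univ L (closure S) := by
    intro S hS
    rw [closure_char hB S]
    exact def_closure_char hD hS
  have hint : ∀ S : Set (Fin n → K), Set.Definable Set.univ L S →
      Set.Definable Set.univ L (interior S) := by
    intro S hS
    have h : interior S = (closure Sᶜ)ᶜ := by rw [closure_compl, compl_compl]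
    rw [h]
    exact (hcl _ hS.compl).compl
  have hp1 : Set.Definable Set.univ L (closure X \ X) := (hcl X hX).sdiff hX
  have hp2 : Set.Definable Set.univ L (X \ interior X) := hX.sdiff (hint X hX)
  have hle : ∀ S : Set (Fin n → K), Set.Definable Set.univ L S →
      dim n S ≤ dim n Set.univ := by
    intro S hS
    have h := h5 n S Set.univ hS Set.definable_univ
    rw [Set.union_univ] at h
    exact h ▸ le_max_left _ _
  have hi1 : ¬ (interior (closure X \ X)).Nonempty := by
    rintro ⟨u, hu⟩
    have hucl : u ∈ closure X := (interior_subset hu).1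
    obtain ⟨v, hv1, hv2⟩ := mem_closure_iff.1 hucl _ isOpen_interior hu
    exact (interior_subset hv1).2 hv2
  have hi2 : ¬ (interior (X \ interior X)).Nonempty := by
    rintro ⟨u, hu⟩
    have hsub : interior (X \ interior X) ⊆ interior X :=
      interior_mono Set.diff_subset
    exact (interior_subset hu).2 (hsub hu)
  have d1 : dim n (closure X \ X) < dim n Set.univ :=
    lt_of_le_of_ne (hle _ hp1) fun h => hi1 ((h7 n _ hp1).mpr h)
  have d2 : dim n (X \ interior X) < dim n Set.univ :=
    lt_of_le_of_ne (hle _ hp2) fun h => hi2 ((h7 n _ hp2).mpr h)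
  have hfr : frontier X = (closure X \ X) ∪ (X \ interior X) := by
    ext u
    simp only [frontier, Set.mem_diff, Set.mem_union]
    constructor
    · rintro ⟨hc, hi⟩
      by_cases hu : u ∈ X
      · exact Or.inr ⟨hu, hi⟩
      · exact Or.inl ⟨hc, hu⟩
    · rintro (⟨hc, hu⟩ | ⟨hu, hi⟩)
      · exact ⟨hc, fun h => hu (interior_subset h)⟩
      · exact ⟨subset_closure hu, hi⟩
  rw [hfr, h5 n _ _ hp1 hp2]
  exact max_lt d1 d2
end
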